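/- Suppose for each flight i there is a chosen slot σ(i) ∈ W(i), prices p: B → ℝ≥0, and values t: A → ℝ≥0 such that (a) t_i = p_{σ(i)} + α_i d_i(σ(i)) for all i, (b) t_i ≤ p_s + α_i d_i(s) for all i and all s ∈ W(i), (c) the capacity constraints |σ^{-1}(s)| ≤ c(s) hold, and (d) p_s = 0 whenever |σ^{-1}(s)| < c(s). Then σ minimizes total delay cost Σ_i α_i d_i(σ(i)) among all feasible integral schedules. -/

import Mathlib

/-!
Weak LP duality: summing (b) at a feasible schedule `τ` gives
`∑ t ≤ ∑ p ∘ τ + cost τ`. Since `p ≥ 0` and `τ` respects the capacities, `∑ p ∘ τ ≤ ∑ c s p s`,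
while complementary slackness (d) turns this into an equality for `σ`, so that (a) gives
`∑ t = ∑ c s p s + cost σ`.
-/

open Finset

section Revenue

variable {A B : Type*} [Fintype A] [Fintype B] [DecidableEq B] (c : B → ℕ) (p : B → ℝ)

lemma sum_comp_eq_sum_card_fiber_mul (τ : A → B) :
    ∑ i, p (τ i) = ∑ s, ((univ.filter (fun i => τ i = s)).card : ℝ) * p s := by
  simp_rw [← sum_fiberwise' univ τ p, sum_const, nsmul_eq_mul]

lemma sum_comp_le_sum_capacity_mul {τ : A → B} (hp : ∀ s, 0 ≤ p s)
    (hτ : ∀ s, (univ.filter (fun i => τ i = s)).card ≤ c s) :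
    ∑ i, p (τ i) ≤ ∑ s, (c s : ℝ) * p s := by
  rw [sum_comp_eq_sum_card_fiber_mul]
  gcongr with s
  · exact hp s
  · exact hτ s

lemma sum_comp_eq_sum_capacity_mul {σ : A → B}
    (hσ : ∀ s, (univ.filter (fun i => σ i = s)).card ≤ c s)
    (hslack : ∀ s, (univ.filter (fun i => σ i = s)).card < c s → p s = 0) :
    ∑ i, p (σ i) = ∑ s, (c s : ℝ) * p s := by
  rw [sum_comp_eq_sum_card_fiber_mul]
  refine sum_congr rfl fun s _ => ?_
  rcases (hσ s).lt_or_eq with hlt | heq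
  · simp [hslack s hlt]
  · rw [heq]

end Revenue

theorem stmt_8_general {A B : Type*} [Fintype A] [Fintype B] [DecidableEq B]
    (W : A → Finset B) (α : A → ℝ) (d : A → B → ℝ) (c : B → ℕ)
    (σ : A → B) (p : B → ℝ) (t : A → ℝ)
    (hp0 : ∀ s, 0 ≤ p s)
    -- (a) the cost of flight i at its assigned slot
    (ha : ∀ i, t i = p (σ i) + α i * d i (σ i))
    -- (b) each flight minimizes total cost
    (hb : ∀ i, ∀ s ∈ W i, t i ≤ p s + α i * d i s)
    -- (c) capacity constraints
    (hc : ∀ s, (Finset.univ.filter (fun i => σ i = s)).card ≤ c s)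
    -- (d) unsaturated slots have zero price
    (hd0 : ∀ s, (Finset.univ.filter (fun i => σ i = s)).card < c s → p s = 0) :
    ∀ τ : A → B, (∀ i, τ i ∈ W i) →
      (∀ s, (Finset.univ.filter (fun i => τ i = s)).card ≤ c s) →
      ∑ i, α i * d i (σ i) ≤ ∑ i, α i * d i (τ i) := by
  intro τ hτW hτc
  have hσ_total : ∑ i, t i = ∑ s, (c s : ℝ) * p s + ∑ i, α i * d i (σ i) := by
    rw [← sum_comp_eq_sum_capacity_mul c p hc hd0, ← sum_add_distrib]
    exact sum_congr rfl fun i _ => ha i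
  have hτ_total : ∑ i, t i ≤ ∑ i, p (τ i) + ∑ i, α i * d i (τ i) := by
    rw [← sum_add_distrib]
    exact sum_le_sum fun i _ => hb i (τ i) (hτW i)
  have hτ_revenue := sum_comp_le_sum_capacity_mul c p hp0 hτc
  linarith

/-- First-welfare-theorem-style result: an equilibrium landing schedule with
prices `p` and costs `t` (conditions (a)–(d)) minimizes the total delay cost
among all feasible integral schedules. -/
theorem stmt_8 {A B : Type*} [Fintype A] [Fintype B] [DecidableEq B]
    (W : A → Finset B) (α : A → ℝ) (d : A → B → ℝ) (c : B → ℕ)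
    (hα : ∀ i, 0 ≤ α i) (hd : ∀ i, ∀ s ∈ W i, 0 ≤ d i s)
    (σ : A → B) (p : B → ℝ) (t : A → ℝ)
    (hσW : ∀ i, σ i ∈ W i)
    (hp0 : ∀ s, 0 ≤ p s) (ht0 : ∀ i, 0 ≤ t i)
    -- (a) the cost of flight i at its assigned slot
    (ha : ∀ i, t i = p (σ i) + α i * d i (σ i))
    -- (b) each flight minimizes total cost
    (hb : ∀ i, ∀ s ∈ W i, t i ≤ p s + α i * d i s)
    -- (c) capacity constraints
    (hc : ∀ s, (Finset.univ.filter (fun i => σ i = s)).card ≤ c s)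
    -- (d) unsaturated slots have zero price
    (hd0 : ∀ s, (Finset.univ.filter (fun i => σ i = s)).card < c s → p s = 0) :
    ∀ τ : A → B, (∀ i, τ i ∈ W i) →
      (∀ s, (Finset.univ.filter (fun i => τ i = s)).card ≤ c s) →
      ∑ i, α i * d i (σ i) ≤ ∑ i, α i * d i (τ i) :=
  stmt_8_general W α d c σ p t hp0 ha hb hc hd0
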